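/- Let R be a finite ring, P a left multiplicative property on R^n, Γ a set of generators of the nonzero principal left ideals of R, and C a left submodule of R^n such that P(c) holds for all nonzero c ∈ C. For x ∈ R^n, if P(γx + c) holds for all γ ∈ Γ and all c ∈ C, then P(rx + c) holds for all nonzero r ∈ R and all c ∈ C. -/

import Mathlib

/-!
Write `r = aγ` and `γ = br`. In the finite ring some power `e = (ba)^(k+1)` is idempotent, and
it fixes `γ`. Then `x = ae` and `y = e(ba)^k b` satisfy `xyx = x`, `yxy = y` and `yx = e`, so
`R = Re ⊕ R(1 - e) = R(xy) ⊕ R(1 - xy)` with `Re ≅ R(xy)` via right multiplication by `y`.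
Finite modules cancel: the numbers of homomorphisms from `A` into the submodules of a finite
module determine, by induction over submodules, the number of homomorphisms with each given
image, and `M × A ≅ M × A'` makes `|Hom(A, X)| = |Hom(A', X)|`; so there is a surjection, hence
an isomorphism, `A → A'`. Hence `R(1 - e) ≅ R(1 - xy)`, and such an isomorphism supplies `w` with
`x + w` a unit and `(x + w)e = ae`. Thus `r = uγ` for a unit `u`, and then
`P(rx + c) = P(u(γx + u⁻¹c)) = P(γx + u⁻¹c)`.
-/

open LinearMap

namespace Module

variable {S : Type*} [Ring S]

instance finite_linearMap {A B : Type*} [AddCommGroup A] [Module S A] [AddCommGroup B]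
    [Module S B] [Finite A] [Finite B] : Finite (A →ₗ[S] B) :=
  .of_injective _ DFunLike.coe_injective

section RangeCount

variable {A A' B : Type*} [AddCommGroup A] [Module S A] [AddCommGroup A'] [Module S A']
  [AddCommGroup B] [Module S B]

def linearMapEquivRangeLE (N : Submodule S B) :
    (A →ₗ[S] N) ≃ {f : A →ₗ[S] B // range f ≤ N} where
  toFun g := ⟨N.subtype ∘ₗ g, by rintro _ ⟨a, rfl⟩; exact (g a).2⟩
  invFun f := f.1.codRestrict N fun a => f.2 ⟨a, rfl⟩
  left_inv _ := rfl
  right_inv _ := rfl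

theorem card_linearMap_submodule [Finite A] [Finite B] (N : Submodule S B) :
    Nat.card (A →ₗ[S] N) = Nat.card {f : A →ₗ[S] B // range f = N} +
      Nat.card (Σ N' : {N' : Submodule S B // N' < N}, {f : A →ₗ[S] B // range f = N'}) := by
  classical
  have hdisj : Disjoint (fun f : A →ₗ[S] B => range f = N) (fun f => range f < N) :=
    Pi.disjoint_iff.2 fun f => Prop.disjoint_iff.2 fun ⟨h1, h2⟩ => h2.ne h1
  rw [Nat.card_congr (linearMapEquivRangeLE N),
    Nat.card_congr ((Equiv.subtypeEquivRight fun f => le_iff_eq_or_lt).trans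
      (subtypeOrEquiv _ _ hdisj)), Nat.card_sum,
    Nat.card_congr (Equiv.sigmaSubtypeFiberEquivSubtype range fun f => Iff.rfl)]

theorem card_range_eq_eq_of_card_linearMap_eq [Finite A] [Finite A'] [Finite B]
    (h : ∀ N : Submodule S B, Nat.card (A →ₗ[S] N) = Nat.card (A' →ₗ[S] N))
    (N : Submodule S B) :
    Nat.card {f : A →ₗ[S] B // range f = N} = Nat.card {f : A' →ₗ[S] B // range f = N} := by
  induction N using WellFoundedLT.induction with
  | _ N ih =>
    have hlower :
        Nat.card (Σ N' : {N' : Submodule S B // N' < N}, {f : A →ₗ[S] B // range f = N'}) =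
          Nat.card (Σ N' : {N' : Submodule S B // N' < N}, {f : A' →ₗ[S] B // range f = N'}) :=
      Nat.card_congr (Equiv.sigmaCongrRight fun N' => (Finite.card_eq.1 (ih N' N'.2)).some)
    have := h N
    rw [card_linearMap_submodule, card_linearMap_submodule, hlower] at this
    omega

end RangeCount

variable {M A A' : Type*} [AddCommGroup M] [Module S M] [AddCommGroup A] [Module S A]
  [AddCommGroup A'] [Module S A'] [Finite M]

theorem card_linearMap_eq_of_linearEquiv_prod (e : (M × A) ≃ₗ[S] (M × A')) (X : Type*)
    [AddCommGroup X] [Module S X] [Finite X] :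
    Nat.card (A →ₗ[S] X) = Nat.card (A' →ₗ[S] X) := by
  have hprod : Nat.card (M →ₗ[S] X) * Nat.card (A →ₗ[S] X) =
      Nat.card (M →ₗ[S] X) * Nat.card (A' →ₗ[S] X) := by
    rw [← Nat.card_prod, ← Nat.card_prod, Nat.card_congr (coprodEquiv ℕ).toEquiv,
      Nat.card_congr (coprodEquiv ℕ).toEquiv,
      Nat.card_congr (e.arrowCongrAddEquiv (LinearEquiv.refl S X)).toEquiv]
  exact Nat.eq_of_mul_eq_mul_left Nat.card_pos hprod

theorem nonempty_linearEquiv_of_linearEquiv_prod [Finite A] [Finite A']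
    (e : (M × A) ≃ₗ[S] (M × A')) : Nonempty (A ≃ₗ[S] A') := by
  have hsurj := card_range_eq_eq_of_card_linearMap_eq
    (fun N : Submodule S A' => card_linearMap_eq_of_linearEquiv_prod e N) ⊤
  obtain ⟨f, hf⟩ : Nonempty {f : A →ₗ[S] A' // range f = ⊤} := by
    refine (Nat.card_pos_iff.1 ?_).1
    rw [hsurj]
    exact Nat.card_pos_iff.2 ⟨⟨⟨LinearMap.id, range_id⟩⟩, inferInstance⟩
  have hcard : Nat.card A = Nat.card A' := by
    have := Nat.card_congr e.toEquiv
    rw [Nat.card_prod, Nat.card_prod] at this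
    exact Nat.eq_of_mul_eq_mul_left Nat.card_pos this
  exact ⟨.ofBijective f ((range_eq_top.1 hf).bijective_of_nat_card_le hcard.le)⟩

end Module

theorem exists_ne_zero_isIdempotentElem_pow {M : Type*} [Monoid M] [Finite M] (t : M) :
    ∃ m ≠ 0, IsIdempotentElem (t ^ m) := by
  obtain ⟨i, j, hne, hij⟩ := Finite.exists_ne_map_eq_of_infinite (t ^ · : ℕ → M)
  wlog hlt : i < j generalizing i j
  · exact this j i hne.symm hij.symm (by omega)
  obtain ⟨q, rfl⟩ := Nat.exists_eq_add_of_lt hlt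
  have hperiod : ∀ n k, t ^ (i + n + k * (q + 1)) = t ^ (i + n) := by
    intro n k
    induction k with
    | zero => simp
    | succ k ih =>
      calc t ^ (i + n + (k + 1) * (q + 1)) = t ^ (i + q + 1) * t ^ (n + k * (q + 1)) := by
            rw [← pow_add]; ring_nf
        _ = t ^ (i + n + k * (q + 1)) := by rw [← hij, ← pow_add]; ring_nf
        _ = t ^ (i + n) := ih
  obtain ⟨n, hn⟩ := Nat.exists_eq_add_of_le (show i ≤ (i + 1) * (q + 1) by nlinarith)
  have := hperiod n (i + 1)
  rw [← hn] at this
  exact ⟨(i + 1) * (q + 1), by positivity, by rwa [IsIdempotentElem, ← pow_add]⟩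

theorem isIdempotentElem_mul_of_mul_mul_eq_self {M : Type*} [Semigroup M] {x y : M}
    (h : x * y * x = x) : IsIdempotentElem (x * y) := by
  rw [IsIdempotentElem, ← mul_assoc, h]

section Ring

variable {R : Type*} [Ring R]

theorem isIdempotentElem_mulRight {e : R} (he : IsIdempotentElem e) :
    IsIdempotentElem (mulRight R e) := by
  rw [IsIdempotentElem, Module.End.mul_eq_comp, ← mulRight_mul, he.eq]

def rangeMulRightEquiv {x y : R} (hx : x * y * x = x) (hy : y * x * y = y) :
    range (mulRight R (y * x)) ≃ₗ[R] range (mulRight R (x * y)) :=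
  have hx' : x * (y * x) = x := by rw [← mul_assoc, hx]
  have hy' : y * (x * y) = y := by rw [← mul_assoc, hy]
  .ofLinearMap
    ((mulRight R y).restrict fun z _ => ⟨z * y, by simp only [mulRight_apply, mul_assoc, hy']⟩)
    ((mulRight R x).restrict fun z _ => ⟨z * x, by simp only [mulRight_apply, mul_assoc, hx']⟩)
    (by ext ⟨_, c, rfl⟩; show c * (x * y) * x * y = c * (x * y); simp only [mul_assoc, hx'])
    (by ext ⟨_, c, rfl⟩; show c * (y * x) * y * x = c * (y * x); simp only [mul_assoc, hy'])

theorem exists_unit_mul_eq_of_linearEquiv_ker [IsDedekindFiniteMonoid R] {x y : R}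
    (hx : x * y * x = x) (hy : y * x * y = y)
    (ψ : ker (mulRight R (y * x)) ≃ₗ[R] ker (mulRight R (x * y))) :
    ∃ u : Rˣ, ↑u * (y * x) = x := by
  have hker {f : R} (hf : IsIdempotentElem f) : 1 - f ∈ ker (mulRight R f) := by
    simp [sub_mul, hf.eq]
  have he := isIdempotentElem_mul_of_mul_mul_eq_self hy
  have he' := isIdempotentElem_mul_of_mul_mul_eq_self hx
  set k : ker (mulRight R (y * x)) := ⟨1 - y * x, hker he⟩
  set w : R := ↑(ψ.symm ⟨1 - x * y, hker he'⟩)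
  set z : R := ↑(ψ k)
  have hwe : w * (y * x) = 0 := (ψ.symm _).2
  have hwz : w * z = 1 - x * y := by
    have : w • k = ψ.symm ⟨1 - x * y, hker he'⟩ := Subtype.ext (by simp [k, mul_sub, hwe, w])
    calc w * z = ↑(ψ (w • k)) := by rw [map_smul]; rfl
      _ = 1 - x * y := by rw [this, LinearEquiv.apply_symm_apply]
  have hzx : (1 - y * x) * z = z := by
    have : (1 - y * x) • k = k := Subtype.ext he.one_sub.eq
    calc (1 - y * x) * z = ↑(ψ ((1 - y * x) • k)) := by rw [map_smul]; rfl
      _ = z := by rw [this]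
  have hxz : x * z = 0 := by
    rw [← hzx, ← mul_assoc, mul_sub, mul_one, ← mul_assoc, hx, sub_self, zero_mul]
  have hwy : w * y = 0 := by rw [← hy, ← mul_assoc, hwe, zero_mul]
  have hunit : (x + w) * (y + z) = 1 := by
    calc (x + w) * (y + z) = x * y + x * z + w * y + w * z := by noncomm_ring
      _ = 1 := by rw [hxz, hwy, hwz]; abel
  refine ⟨.mkOfMulEqOne _ _ hunit, ?_⟩
  rw [Units.val_mkOfMulEqOne, add_mul, hwe, add_zero, ← mul_assoc, hx]

theorem exists_unit_mul_eq_of_mul_mul_eq_self [Finite R] {x y : R} (hx : x * y * x = x)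
    (hy : y * x * y = y) : ∃ u : Rˣ, ↑u * (y * x) = x := by
  have hsplit {f : R} (hf : IsIdempotentElem f) :
      R ≃ₗ[R] range (mulRight R f) × ker (mulRight R f) :=
    (Submodule.prodEquivOfIsCompl _ _ (isIdempotentElem_mulRight hf).isCompl).symm
  have he := isIdempotentElem_mul_of_mul_mul_eq_self hy
  have he' := isIdempotentElem_mul_of_mul_mul_eq_self hx
  obtain ⟨ψ⟩ := Module.nonempty_linearEquiv_of_linearEquiv_prod
    (((rangeMulRightEquiv hx hy).symm.prodCongr (.refl R _)).trans
      ((hsplit he).symm.trans (hsplit he')))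
  exact exists_unit_mul_eq_of_linearEquiv_ker hx hy ψ

theorem exists_unit_mul_eq_of_span_singleton_eq [Finite R] {r γ : R}
    (h : Ideal.span {r} = Ideal.span {γ}) : ∃ u : Rˣ, ↑u * γ = r := by
  obtain ⟨a, hra⟩ := Ideal.mem_span_singleton'.1 (h ▸ Ideal.mem_span_singleton_self r)
  obtain ⟨b, hγb⟩ := Ideal.mem_span_singleton'.1 (h ▸ Ideal.mem_span_singleton_self γ)
  have htγ : ∀ n, (b * a) ^ n * γ = γ := by
    intro n
    induction n with
    | zero => rw [pow_zero, one_mul]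
    | succ n ih => rw [pow_succ, mul_assoc, mul_assoc, hra, hγb, ih]
  obtain ⟨_ | k, hk, he⟩ := exists_ne_zero_isIdempotentElem_pow (b * a)
  · exact absurd rfl hk
  set e := (b * a) ^ (k + 1)
  set c := (b * a) ^ k * b
  have hca : c * a = e := by rw [mul_assoc, ← pow_succ]
  have hyx : e * c * (a * e) = e := by
    rw [show e * c * (a * e) = e * (c * a) * e by simp only [mul_assoc], hca, he.eq, he.eq]
  obtain ⟨u, hu⟩ := exists_unit_mul_eq_of_mul_mul_eq_self (x := a * e) (y := e * c)
    (by rw [mul_assoc, hyx, mul_assoc, he.eq]) (by rw [hyx, ← mul_assoc, he.eq])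
  rw [hyx] at hu
  refine ⟨u, ?_⟩
  calc ↑u * γ = ↑u * e * γ := by rw [mul_assoc, htγ]
    _ = r := by rw [hu, mul_assoc, htγ, hra]

end Ring

theorem gamma_sufficient {R : Type*} [Ring R] [Finite R] (n : ℕ)
    (P : (Fin n → R) → Bool)
    (hP : ∀ (u : Rˣ) (x : Fin n → R), P ((u : R) • x) = P x)
    (Γ : Set R)
    (hΓ : ∀ r : R, r ≠ 0 → ∃ γ ∈ Γ, Ideal.span {r} = Ideal.span {γ})
    (C : Submodule R (Fin n → R))
    (x : Fin n → R)
    (hx : ∀ γ ∈ Γ, ∀ c ∈ C, P (γ • x + c) = true) :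
    ∀ r : R, r ≠ 0 → ∀ c ∈ C, P (r • x + c) = true := by
  intro r hr c hc
  obtain ⟨γ, hγ, hspan⟩ := hΓ r hr
  obtain ⟨u, rfl⟩ := exists_unit_mul_eq_of_span_singleton_eq hspan
  have hsmul : (u : R) • (γ • x + (↑u⁻¹ : R) • c) = (↑u * γ) • x + c := by
    rw [smul_add, smul_smul, smul_smul, Units.mul_inv, one_smul]
  rw [← hsmul, hP]
  exact hx γ hγ _ (C.smul_mem _ hc)
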